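/- Let K be a field of characteristic zero and let P = x + Σ_{2≤i+j≤3} p_{ij} x^i y^j and Q = y + Σ_{2≤i+j≤3} q_{ij} x^i y^j be polynomials in K[x,y] (a Poincaré differential form of degree 3). Suppose F ∈ K[[x,y]] is a formal power series such that F − (x² + y²) has order at least 3, and (s_j)_{j≥1} is a sequence in K with F_x·Q − F_y·P = Σ_{j=1}^∞ s_j·(x^{2j+2} + y^{2j+2}) in K[[x,y]]. Then s_1 = (2/3)·p_{02}·q_{02} + (1/3)·p_{02}·p_{11} − (1/3)·q_{02}·q_{11} + (1/3)·p_{11}·p_{20} − (1/3)·q_{11}·q_{20} − (2/3)·p_{20}·q_{20} − p_{03} + (1/3)·q_{12} − (1/3)·p_{21} + q_{30}. -/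

import Mathlib

/-!
Write `F = (x² + y²) + F₃ + F₄ + ⋯` and `L H = y ∂ₓH - x ∂ᵧH`. The cubic part of `F_x Q - F_y P` is
`L F₃ + 2x Q₂ - 2y P₂`; since `L` is invertible on cubic forms, its vanishing determines `F₃`.
The quartic part is `L F₄ + (F₃)_x Q₂ - (F₃)_y P₂ + 2x Q₃ - 2y P₃ = s₁ (x⁴ + y⁴)`. The mean over
the unit circle, which on quartic forms is proportional to `3 c₄₀ + c₂₂ + 3 c₀₄`, kills
`L F₄ = -∂_θ F₄` and leaves `6 s₁` as a polynomial in `F₃`, `P` and `Q`.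
-/

open MvPolynomial

/-- The formal partial derivative of a formal power series in two variables. -/
noncomputable def psDeriv {K : Type*} [CommSemiring K] (i : Fin 2)
    (f : MvPowerSeries (Fin 2) K) : MvPowerSeries (Fin 2) K :=
  fun e => ((e i + 1 : ℕ) : K) * MvPowerSeries.coeff (e + Finsupp.single i 1) f

noncomputable def bideg (a b : ℕ) : Fin 2 →₀ ℕ := Finsupp.single 0 a + Finsupp.single 1 b

@[simp] lemma bideg_apply_zero (a b : ℕ) : bideg a b 0 = a := by simp [bideg]

@[simp] lemma bideg_apply_one (a b : ℕ) : bideg a b 1 = b := by simp [bideg]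

lemma single_zero_eq_bideg (n : ℕ) : Finsupp.single (0 : Fin 2) n = bideg n 0 := by simp [bideg]

lemma single_one_eq_bideg (n : ℕ) : Finsupp.single (1 : Fin 2) n = bideg 0 n := by simp [bideg]

lemma bideg_inj {a b c d : ℕ} : bideg a b = bideg c d ↔ a = c ∧ b = d := by
  refine ⟨fun h => ⟨?_, ?_⟩, fun ⟨hac, hbd⟩ => hac ▸ hbd ▸ rfl⟩
  · simpa using DFunLike.congr_fun h 0
  · simpa using DFunLike.congr_fun h 1

lemma bideg_le_bideg {a b c d : ℕ} : bideg a b ≤ bideg c d ↔ a ≤ c ∧ b ≤ d := by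
  refine ⟨fun h => ⟨by simpa using h 0, by simpa using h 1⟩, fun ⟨hac, hbd⟩ i => ?_⟩
  fin_cases i <;> simpa

lemma bideg_add_bideg (a b c d : ℕ) : bideg a b + bideg c d = bideg (a + c) (b + d) := by
  ext i; fin_cases i <;> simp

lemma bideg_tsub_bideg (a b c d : ℕ) : bideg a b - bideg c d = bideg (a - c) (b - d) := by
  ext i; fin_cases i <;> simp

section CommSemiring

variable {K : Type*} [CommSemiring K]

lemma coeff_bideg_psDeriv_zero (F : MvPowerSeries (Fin 2) K) (a b : ℕ) :
    MvPowerSeries.coeff (bideg a b) (psDeriv 0 F)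
      = (a + 1 : K) * MvPowerSeries.coeff (bideg (a + 1) b) F := by
  change ((bideg a b 0 + 1 : ℕ) : K) * MvPowerSeries.coeff (bideg a b + Finsupp.single 0 1) F = _
  rw [single_zero_eq_bideg, bideg_add_bideg]
  simp

lemma coeff_bideg_psDeriv_one (F : MvPowerSeries (Fin 2) K) (a b : ℕ) :
    MvPowerSeries.coeff (bideg a b) (psDeriv 1 F)
      = (b + 1 : K) * MvPowerSeries.coeff (bideg a (b + 1)) F := by
  change ((bideg a b 1 + 1 : ℕ) : K) * MvPowerSeries.coeff (bideg a b + Finsupp.single 1 1) F = _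
  rw [single_one_eq_bideg, bideg_add_bideg]
  simp

lemma coeff_bideg_mul_monomial_bideg (f : MvPowerSeries (Fin 2) K) (a b i j : ℕ) (c : K) :
    MvPowerSeries.coeff (bideg a b) (f * MvPowerSeries.monomial (bideg i j) c)
      = if i ≤ a ∧ j ≤ b then MvPowerSeries.coeff (bideg (a - i) (b - j)) f * c else 0 := by
  simp only [MvPowerSeries.coeff_mul_monomial, bideg_le_bideg, bideg_tsub_bideg]

lemma coe_C_mul_X_pow_mul_X_pow (c : K) (i j : ℕ) :
    ((C c * X 0 ^ i * X 1 ^ j : MvPolynomial (Fin 2) K) : MvPowerSeries (Fin 2) K)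
      = MvPowerSeries.monomial (bideg i j) c := by
  rw [X_pow_eq_monomial, X_pow_eq_monomial, C_mul_monomial, monomial_mul, coe_monomial, bideg]
  simp

noncomputable def nonlinearPart (c : ℕ → ℕ → K) : MvPolynomial (Fin 2) K :=
  ∑ ij ∈ (Finset.range 4 ×ˢ Finset.range 4).filter (fun ij => 2 ≤ ij.1 + ij.2 ∧ ij.1 + ij.2 ≤ 3),
    C (c ij.1 ij.2) * X 0 ^ ij.1 * X 1 ^ ij.2

lemma coe_nonlinearPart (c : ℕ → ℕ → K) :
    (nonlinearPart c : MvPowerSeries (Fin 2) K)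
      = MvPowerSeries.monomial (bideg 0 2) (c 0 2) + MvPowerSeries.monomial (bideg 0 3) (c 0 3)
        + MvPowerSeries.monomial (bideg 1 1) (c 1 1) + MvPowerSeries.monomial (bideg 1 2) (c 1 2)
        + MvPowerSeries.monomial (bideg 2 0) (c 2 0) + MvPowerSeries.monomial (bideg 2 1) (c 2 1)
        + MvPowerSeries.monomial (bideg 3 0) (c 3 0) := by
  rw [nonlinearPart, ← coeToMvPowerSeries.ringHom_apply, map_sum]
  simp only [coeToMvPowerSeries.ringHom_apply, coe_C_mul_X_pow_mul_X_pow]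
  simp [Finset.sum_filter, Finset.sum_product, Finset.sum_range_succ]
  abel

end CommSemiring

section CommRing

variable {K : Type*} [CommRing K]

lemma coe_X_zero : ((X 0 : MvPolynomial (Fin 2) K) : MvPowerSeries (Fin 2) K)
    = MvPowerSeries.monomial (bideg 1 0) 1 := by
  simpa using coe_C_mul_X_pow_mul_X_pow (1 : K) 1 0

lemma coe_X_one : ((X 1 : MvPolynomial (Fin 2) K) : MvPowerSeries (Fin 2) K)
    = MvPowerSeries.monomial (bideg 0 1) 1 := by
  simpa using coe_C_mul_X_pow_mul_X_pow (1 : K) 0 1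

lemma coeff_bideg_of_three_le_order {F : MvPowerSeries (Fin 2) K}
    (hF : 3 ≤ (F - ((X 0 ^ 2 + X 1 ^ 2 : MvPolynomial (Fin 2) K) : MvPowerSeries (Fin 2) K)).order)
    {a b : ℕ} (hab : a + b < 3) :
    MvPowerSeries.coeff (bideg a b) F = if (a = 2 ∧ b = 0) ∨ (a = 0 ∧ b = 2) then 1 else 0 := by
  have hdeg : (bideg a b).degree < (3 : ℕ∞) := by
    rw [Finsupp.degree_eq_sum, Fin.sum_univ_two, bideg_apply_zero, bideg_apply_one]
    exact_mod_cast hab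
  have := MvPowerSeries.coeff_of_lt_order (hdeg.trans_le hF)
  rw [map_sub, sub_eq_zero, coeff_coe, coeff_add, coeff_X_pow, coeff_X_pow,
    single_zero_eq_bideg, single_one_eq_bideg] at this
  simp only [this, bideg_inj]
  split_ifs <;> first | omega | simp

noncomputable def orbitalDeriv (F : MvPowerSeries (Fin 2) K) (P Q : MvPolynomial (Fin 2) K) :
    MvPowerSeries (Fin 2) K :=
  psDeriv 0 F * (Q : MvPowerSeries (Fin 2) K) - psDeriv 1 F * (P : MvPowerSeries (Fin 2) K)

theorem cubic_coeffs_of_orbitalDeriv {F : MvPowerSeries (Fin 2) K} {p q : ℕ → ℕ → K}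
    (hF : 3 ≤ (F - ((X 0 ^ 2 + X 1 ^ 2 : MvPolynomial (Fin 2) K) : MvPowerSeries (Fin 2) K)).order)
    (h : ∀ a b, a + b = 3 → MvPowerSeries.coeff (bideg a b)
      (orbitalDeriv F (X 0 + nonlinearPart p) (X 1 + nonlinearPart q)) = 0) :
    MvPowerSeries.coeff (bideg 2 1) F = 2 * q 2 0 ∧
    MvPowerSeries.coeff (bideg 1 2) F = 2 * p 0 2 ∧
    3 * MvPowerSeries.coeff (bideg 3 0) F = 2 * p 2 0 + 4 * p 0 2 - 2 * q 1 1 ∧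
    3 * MvPowerSeries.coeff (bideg 0 3) F = 4 * q 2 0 + 2 * q 0 2 - 2 * p 1 1 := by
  have h30 := h 3 0 rfl
  have h21 := h 2 1 rfl
  have h12 := h 1 2 rfl
  have h03 := h 0 3 rfl
  simp only [orbitalDeriv, coe_add, coe_X_zero, coe_X_one, coe_nonlinearPart, mul_add, map_add,
    map_sub, coeff_bideg_mul_monomial_bideg, coeff_bideg_psDeriv_zero,
    coeff_bideg_psDeriv_one] at h30 h21 h12 h03
  norm_num [coeff_bideg_of_three_le_order hF] at h30 h21 h12 h03
  refine ⟨by linear_combination -h30, by linear_combination h03, ?_, ?_⟩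
  · linear_combination h21 + 2 * h03
  · linear_combination -h12 - 2 * h30

theorem six_mul_eq_of_coeff_orbitalDeriv {F : MvPowerSeries (Fin 2) K} {p q : ℕ → ℕ → K} {s : K}
    (hF : 3 ≤ (F - ((X 0 ^ 2 + X 1 ^ 2 : MvPolynomial (Fin 2) K) : MvPowerSeries (Fin 2) K)).order)
    (h40 : MvPowerSeries.coeff (bideg 4 0)
      (orbitalDeriv F (X 0 + nonlinearPart p) (X 1 + nonlinearPart q)) = s)
    (h22 : MvPowerSeries.coeff (bideg 2 2)
      (orbitalDeriv F (X 0 + nonlinearPart p) (X 1 + nonlinearPart q)) = 0)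
    (h04 : MvPowerSeries.coeff (bideg 0 4)
      (orbitalDeriv F (X 0 + nonlinearPart p) (X 1 + nonlinearPart q)) = s) :
    6 * s = (9 * q 2 0 + 3 * q 0 2) * MvPowerSeries.coeff (bideg 3 0) F
        + (2 * q 1 1 - 3 * p 2 0 - p 0 2) * MvPowerSeries.coeff (bideg 2 1) F
        + (q 2 0 + 3 * q 0 2 - 2 * p 1 1) * MvPowerSeries.coeff (bideg 1 2) F
        - (9 * p 0 2 + 3 * p 2 0) * MvPowerSeries.coeff (bideg 0 3) F
        + 6 * (q 3 0 - p 0 3) + 2 * (q 1 2 - p 2 1) := by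
  simp only [orbitalDeriv, coe_add, coe_X_zero, coe_X_one, coe_nonlinearPart, mul_add, map_add,
    map_sub, coeff_bideg_mul_monomial_bideg, coeff_bideg_psDeriv_zero,
    coeff_bideg_psDeriv_one] at h40 h22 h04
  norm_num [coeff_bideg_of_three_le_order hF] at h40 h22 h04
  linear_combination -3 * h40 - h22 - 3 * h04

end CommRing

theorem first_focal_value_formula
    (K : Type*) [Field K] [CharZero K]
    (p q : ℕ → ℕ → K)
    (P Q : MvPolynomial (Fin 2) K)
    (hP : P = X 0 + ∑ ij ∈ (Finset.range 4 ×ˢ Finset.range 4).filter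
        (fun ij => 2 ≤ ij.1 + ij.2 ∧ ij.1 + ij.2 ≤ 3),
        C (p ij.1 ij.2) * X 0 ^ ij.1 * X 1 ^ ij.2)
    (hQ : Q = X 1 + ∑ ij ∈ (Finset.range 4 ×ˢ Finset.range 4).filter
        (fun ij => 2 ≤ ij.1 + ij.2 ∧ ij.1 + ij.2 ≤ 3),
        C (q ij.1 ij.2) * X 0 ^ ij.1 * X 1 ^ ij.2)
    (F : MvPowerSeries (Fin 2) K)
    (hF : ∀ e : Fin 2 →₀ ℕ, e 0 + e 1 < 3 →
      MvPowerSeries.coeff e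
        (F - (((X 0)^2 + (X 1)^2 : MvPolynomial (Fin 2) K) : MvPowerSeries (Fin 2) K)) = 0)
    (s : ℕ → K)
    (hs : ∀ j : ℕ, 1 ≤ j →
      MvPowerSeries.coeff (Finsupp.single 0 (2*j+2))
        (psDeriv 0 F * (Q : MvPowerSeries (Fin 2) K)
          - psDeriv 1 F * (P : MvPowerSeries (Fin 2) K)) = s j ∧
      MvPowerSeries.coeff (Finsupp.single 1 (2*j+2))
        (psDeriv 0 F * (Q : MvPowerSeries (Fin 2) K)
          - psDeriv 1 F * (P : MvPowerSeries (Fin 2) K)) = s j)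
    (hs0 : ∀ e : Fin 2 →₀ ℕ,
      (¬ ∃ j : ℕ, 1 ≤ j ∧ (e = Finsupp.single 0 (2*j+2) ∨ e = Finsupp.single 1 (2*j+2))) →
      MvPowerSeries.coeff e
        (psDeriv 0 F * (Q : MvPowerSeries (Fin 2) K)
          - psDeriv 1 F * (P : MvPowerSeries (Fin 2) K)) = 0) :
    s 1 = (2/3) * p 0 2 * q 0 2 + (1/3) * p 0 2 * p 1 1 - (1/3) * q 0 2 * q 1 1
      + (1/3) * p 1 1 * p 2 0 - (1/3) * q 1 1 * q 2 0 - (2/3) * p 2 0 * q 2 0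
      - p 0 3 + (1/3) * q 1 2 - (1/3) * p 2 1 + q 3 0 := by
  obtain rfl : P = X 0 + nonlinearPart p := hP
  obtain rfl : Q = X 1 + nonlinearPart q := hQ
  have hF' : (3 : ℕ∞) ≤ (F - ((X 0 ^ 2 + X 1 ^ 2 : MvPolynomial (Fin 2) K) :
      MvPowerSeries (Fin 2) K)).order := by
    refine MvPowerSeries.le_order fun e he => hF e ?_
    rw [Finsupp.degree_eq_sum, Fin.sum_univ_two] at he
    exact_mod_cast he
  have hvanish : ∀ a b, a + b = 3 ∨ (a = 2 ∧ b = 2) → MvPowerSeries.coeff (bideg a b)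
      (orbitalDeriv F (X 0 + nonlinearPart p) (X 1 + nonlinearPart q)) = 0 := by
    refine fun a b hab => hs0 _ ?_
    rintro ⟨j, -, h | h⟩
    · rw [single_zero_eq_bideg, bideg_inj] at h; omega
    · rw [single_one_eq_bideg, bideg_inj] at h; omega
  obtain ⟨h21, h12, h30, h03⟩ :=
    cubic_coeffs_of_orbitalDeriv hF' fun a b hab => hvanish a b (.inl hab)
  have hmean := six_mul_eq_of_coeff_orbitalDeriv hF'
    (single_zero_eq_bideg 4 ▸ (hs 1 le_rfl).1) (hvanish 2 2 (.inr ⟨rfl, rfl⟩))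
    (single_one_eq_bideg 4 ▸ (hs 1 le_rfl).2)
  linear_combination (1 / 6 : K) * (hmean + (3 * q 2 0 + q 0 2) * h30
    + (2 * q 1 1 - 3 * p 2 0 - p 0 2) * h21 + (q 2 0 + 3 * q 0 2 - 2 * p 1 1) * h12
    - (3 * p 0 2 + p 2 0) * h03)
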